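/- Let n ≥ 3 be odd, d > 2, E ⊆ ℤ_n^d. If |E| > τ(n)·n^d / γ(n)^{(d−2)/2}, where τ(n) is the number of divisors of n and γ(n) is the smallest prime divisor of n, then the dot-product set Π(E) = {x·y : x, y ∈ E} equals all of ℤ_n. -/

import Mathlib

set_option linter.unusedSectionVars false
set_option linter.unusedVariables false

open Finset

noncomputable def chi (n : ℕ) (t : ZMod n) : ℂ :=
  Complex.exp (2 * Real.pi * Complex.I * (t.val : ℂ) / (n : ℂ))

def dot {n d : ℕ} (x y : Fin d → ZMod n) : ZMod n := ∑ i, x i * y i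

def nrm {n d : ℕ} (z : Fin d → ZMod n) : ZMod n := ∑ i, z i ^ 2

noncomputable def ft (n d : ℕ) [NeZero n] (f : (Fin d → ZMod n) → ℂ)
    (m : Fin d → ZMod n) : ℂ :=
  (n : ℂ)⁻¹ ^ d * ∑ x : Fin d → ZMod n, f x * chi n (-(dot x m))

section ChiLemmas
variable (n : ℕ) [NeZero n]

lemma chi_zero : chi n 0 = 1 := by
  simp [chi]

lemma chi_natCast (m : ℕ) :
    chi n ((m : ZMod n)) = Complex.exp (2 * Real.pi * Complex.I * (m : ℂ) / (n : ℂ)) := by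
  have hn : (n : ℂ) ≠ 0 := Nat.cast_ne_zero.mpr (NeZero.ne n)
  have hm : (m : ℂ) = (((m : ZMod n).val : ℕ) : ℂ) + (n : ℂ) * ((m / n : ℕ) : ℂ) := by
    rw [ZMod.val_natCast]
    exact_mod_cast (Nat.mod_add_div m n).symm
  rw [chi, hm]
  rw [show 2 * Real.pi * Complex.I * ((((m : ZMod n).val : ℕ) : ℂ) + (n : ℂ) * ((m / n : ℕ) : ℂ)) / (n:ℂ)
      = 2 * Real.pi * Complex.I * (((m : ZMod n).val : ℕ) : ℂ) / (n:ℂ)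
        + ((m / n : ℕ) : ℂ) * (2 * Real.pi * Complex.I) from by field_simp]
  rw [Complex.exp_add, Complex.exp_nat_mul_two_pi_mul_I, mul_one]

lemma chi_add (a b : ZMod n) : chi n (a + b) = chi n a * chi n b := by
  have ha : ((a.val : ℕ) : ZMod n) = a := ZMod.natCast_rightInverse a
  have hb : ((b.val : ℕ) : ZMod n) = b := ZMod.natCast_rightInverse b
  have h1 : chi n (a + b) = chi n (((a.val + b.val : ℕ) : ZMod n)) := by
    rw [Nat.cast_add, ha, hb]
  rw [h1, chi_natCast, chi, chi, ← Complex.exp_add, Nat.cast_add]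
  congr 1
  ring

lemma chi_abs (t : ZMod n) : ‖chi n t‖ = 1 := by
  have : 2 * Real.pi * Complex.I * (t.val : ℂ) / n
      = ((2 * Real.pi * t.val / n : ℝ) : ℂ) * Complex.I := by
    push_cast; ring
  rw [chi, this, Complex.norm_exp_ofReal_mul_I]

lemma chi_eq_one (t : ZMod n) (h : chi n t = 1) : t = 0 := by
  rw [chi, Complex.exp_eq_one_iff] at h
  obtain ⟨k, hk⟩ := h
  have hn : (n : ℂ) ≠ 0 := Nat.cast_ne_zero.mpr (NeZero.ne n)
  have hpi : (2 * (Real.pi:ℂ) * Complex.I) ≠ 0 := by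
    simp [Real.pi_ne_zero, Complex.I_ne_zero]
  have hc : (t.val : ℂ) = (k : ℂ) * n := by
    rw [div_eq_iff hn] at hk
    have h2 : 2 * (Real.pi:ℂ) * Complex.I * (t.val:ℂ)
        = 2 * (Real.pi:ℂ) * Complex.I * ((k:ℂ) * n) := by
      rw [hk]; ring
    exact mul_left_cancel₀ hpi h2
  have hz : (t.val : ℤ) = k * n := by exact_mod_cast hc
  have hlt : t.val < n := ZMod.val_lt t
  have hn' : (0:ℤ) < n := by exact_mod_cast Nat.pos_of_ne_zero (NeZero.ne n)
  have hk0 : k = 0 := by nlinarith [hz, (by exact_mod_cast hlt : (t.val:ℤ) < n), (by positivity : (0:ℤ) ≤ (t.val:ℤ))]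
  rw [hk0, zero_mul] at hz
  have : t.val = 0 := by exact_mod_cast hz
  exact (ZMod.val_eq_zero t).mp this

lemma chi_neg (t : ZMod n) : chi n (-t) = (starRingEnd ℂ) (chi n t) := by
  have h1 : chi n t * chi n (-t) = 1 := by
    rw [← chi_add]; simp [chi_zero]
  have h2 : chi n t * (starRingEnd ℂ) (chi n t) = 1 := by
    rw [Complex.mul_conj]
    norm_cast
    rw [Complex.normSq_eq_norm_sq, chi_abs]; norm_num
  rw [eq_inv_of_mul_eq_one_right h1]
  rw [eq_inv_of_mul_eq_one_right h2]

end ChiLemmas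

section Orth
variable (n : ℕ) [NeZero n]

lemma sum_chi (u : ZMod n) :
    ∑ s : ZMod n, chi n (s * u) = if u = 0 then (n : ℂ) else 0 := by
  by_cases hu : u = 0
  · simp [hu, chi_zero, ZMod.card]
  · rw [if_neg hu]
    have hshift : ∑ s : ZMod n, chi n ((s + 1) * u) = ∑ s : ZMod n, chi n (s * u) :=
      Fintype.sum_equiv (Equiv.addRight (1 : ZMod n)) _ _ (fun s => rfl)
    have hexp : ∀ s : ZMod n, chi n ((s + 1) * u) = chi n (s * u) * chi n u := by
      intro s; rw [add_mul, one_mul, chi_add]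
    rw [Finset.sum_congr rfl (fun s _ => hexp s)] at hshift
    rw [← Finset.sum_mul] at hshift
    have hchi : chi n u ≠ 1 := fun h => hu (chi_eq_one n u h)
    by_contra hS
    exact hchi (mul_left_cancel₀ hS (by rw [hshift, mul_one]))

lemma chi_finsum {ι : Type*} (s : Finset ι) (f : ι → ZMod n) :
    chi n (∑ i ∈ s, f i) = ∏ i ∈ s, chi n (f i) := by
  classical
  induction s using Finset.induction_on with
  | empty => simp [chi_zero]
  | insert a s h ih => rw [Finset.sum_insert h, Finset.prod_insert h, chi_add, ih]

lemma sum_chi_dot (d : ℕ) (w : Fin d → ZMod n) :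
    ∑ x : Fin d → ZMod n, chi n (dot x w)
      = if w = 0 then ((n : ℂ)) ^ d else 0 := by
  classical
  have h1 : ∀ x : Fin d → ZMod n, chi n (dot x w) = ∏ i, chi n (x i * w i) := by
    intro x; rw [dot, chi_finsum]
  rw [Finset.sum_congr rfl (fun x _ => h1 x)]
  have h2 : ∑ x : Fin d → ZMod n, ∏ i, chi n (x i * w i)
      = ∏ i, ∑ c : ZMod n, chi n (c * w i) := by
    rw [Finset.prod_univ_sum (fun _ => (Finset.univ : Finset (ZMod n)))
      (fun i c => chi n (c * w i))]
    rw [Fintype.piFinset_univ]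
  rw [h2]
  by_cases hw : w = 0
  · subst hw
    simp only [Pi.zero_apply, if_pos rfl]
    rw [Finset.prod_congr rfl (fun i _ => by rw [sum_chi n 0, if_pos rfl])]
    simp
  · rw [if_neg hw]
    obtain ⟨i, hi⟩ : ∃ i, w i ≠ 0 := by
      by_contra h; push_neg at h; exact hw (funext h)
    apply Finset.prod_eq_zero (Finset.mem_univ i)
    rw [sum_chi n (w i), if_neg hi]

end Orth

section Kernel
variable (n : ℕ) [NeZero n]

lemma card_mul_eq_zero_le (s : ZMod n) :
    ((univ : Finset (ZMod n)).filter fun c => s * c = 0).card ≤ n.gcd s.val := by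
  classical
  set g := n.gcd s.val with hgdef
  have hg : 0 < g := Nat.gcd_pos_of_pos_left _ (Nat.pos_of_ne_zero (NeZero.ne n))
  have key : ∀ c : ZMod n, s * c = 0 → g • c = 0 := by
    intro c hc
    have hbez : ((g : ℤ) : ZMod n)
        = ((n * Nat.gcdA n s.val + s.val * Nat.gcdB n s.val : ℤ) : ZMod n) := by
      rw [← Nat.gcd_eq_gcd_ab]
    have hsval : ((s.val : ℕ) : ZMod n) = s := ZMod.natCast_rightInverse s
    push_cast at hbez
    rw [ZMod.natCast_self, hsval, zero_mul, zero_add] at hbez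
    rw [nsmul_eq_mul]
    push_cast
    rw [hbez, mul_assoc, mul_comm _ c, ← mul_assoc, hc, zero_mul]
  have hsub : ((univ : Finset (ZMod n)).filter fun c => s * c = 0)
      ⊆ ((univ : Finset (ZMod n)).filter fun c => g • c = 0) := by
    intro c hc
    rw [Finset.mem_filter] at hc ⊢
    exact ⟨hc.1, key c hc.2⟩
  refine le_trans (Finset.card_le_card hsub) ?_
  have := IsAddCyclic.card_nsmul_eq_zero_le (α := ZMod n) hg
  convert this using 2

lemma card_mul_eq_le (s b : ZMod n) :
    ((univ : Finset (ZMod n)).filter fun c => s * c = b).card ≤ n.gcd s.val := by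
  classical
  rcases Finset.eq_empty_or_nonempty ((univ : Finset (ZMod n)).filter fun c => s * c = b)
    with h | ⟨c₀, hc₀⟩
  · rw [h, Finset.card_empty]
    exact Nat.zero_le _
  · rw [Finset.mem_filter] at hc₀
    refine le_trans ?_ (card_mul_eq_zero_le n s)
    apply Finset.card_le_card_of_injOn (fun c => c - c₀)
    · intro c hc
      rw [Finset.mem_coe, Finset.mem_filter] at hc
      rw [Finset.mem_coe, Finset.mem_filter]
      refine ⟨Finset.mem_univ _, ?_⟩
      rw [mul_sub, hc.2, hc₀.2, sub_self]
    · intro a _ b' _ hab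
      simpa using hab
end Kernel

section KernelVec
variable (n : ℕ) [NeZero n]

lemma card_fiber_vec {d : ℕ} (s : ZMod n) (E : Finset (Fin d → ZMod n))
    (y : Fin d → ZMod n) :
    (E.filter fun y' => (fun i => s * (y i - y' i)) = (0 : Fin d → ZMod n)).card
      ≤ (n.gcd s.val) ^ d := by
  classical
  have hsub : (E.filter fun y' => (fun i => s * (y i - y' i)) = (0 : Fin d → ZMod n))
      ⊆ Fintype.piFinset (fun i => (univ : Finset (ZMod n)).filter fun c => s * c = s * y i) := by
    intro y' hy'
    rw [Finset.mem_filter] at hy'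
    rw [Fintype.mem_piFinset]
    intro i
    rw [Finset.mem_filter]
    refine ⟨Finset.mem_univ _, ?_⟩
    have := congrFun hy'.2 i
    simp only [Pi.zero_apply] at this
    rw [mul_sub, sub_eq_zero] at this
    exact this.symm
  refine le_trans (Finset.card_le_card hsub) ?_
  rw [Fintype.card_piFinset]
  calc ∏ i, ((univ : Finset (ZMod n)).filter fun c => s * c = s * y i).card
      ≤ ∏ _i : Fin d, n.gcd s.val :=
        Finset.prod_le_prod' (fun i _ => card_mul_eq_le n s (s * y i))
    _ = (n.gcd s.val) ^ d := by rw [Finset.prod_const, Finset.card_univ, Fintype.card_fin]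

end KernelVec

section GcdSum
variable (n : ℕ) [NeZero n]

lemma gcd_mem_properDivisors (s : ZMod n) (hs : s ≠ 0) :
    n.gcd s.val ∈ n.properDivisors := by
  rw [Nat.mem_properDivisors]
  refine ⟨Nat.gcd_dvd_left _ _, ?_⟩
  have hv : 0 < s.val := by
    rcases Nat.eq_zero_or_pos s.val with h | h
    · exact absurd ((ZMod.val_eq_zero s).mp h) hs
    · exact h
  have h1 : n.gcd s.val ≤ s.val := Nat.le_of_dvd hv (Nat.gcd_dvd_right _ _)
  exact lt_of_le_of_lt h1 (ZMod.val_lt s)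

lemma fiber_card_le (e : ℕ) (he : e ∈ n.properDivisors) :
    (((univ : Finset (ZMod n)).erase 0).filter fun s => n.gcd s.val = e).card ≤ n / e := by
  classical
  obtain ⟨hdvd, hlt⟩ := Nat.mem_properDivisors.mp he
  have he0 : 0 < e := by
    rcases Nat.eq_zero_or_pos e with h | h
    · subst h
      simp only [Nat.zero_dvd] at hdvd
      exact absurd hdvd (NeZero.ne n)
    · exact h
  rw [← Finset.card_range (n / e)]
  apply Finset.card_le_card_of_injOn (fun s : ZMod n => s.val / e)
  · intro s hsmem
    rw [Finset.mem_coe, Finset.mem_filter] at hsmem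
    rw [Finset.mem_coe, Finset.mem_range]
    exact Nat.div_lt_div_of_lt_of_dvd hdvd (ZMod.val_lt s)
  · intro a ha b hb hab
    rw [Finset.mem_coe, Finset.mem_filter] at ha hb
    have hea : e ∣ a.val := ha.2 ▸ Nat.gcd_dvd_right _ _
    have heb : e ∣ b.val := hb.2 ▸ Nat.gcd_dvd_right _ _
    have hab' : a.val / e = b.val / e := hab
    have : a.val = b.val := by
      rw [← Nat.div_mul_cancel hea, ← Nat.div_mul_cancel heb, hab']
    exact ZMod.val_injective n this

lemma gcd_sum_le :
    ∑ s ∈ (univ : Finset (ZMod n)).erase 0, n.gcd s.val ≤ n * n.divisors.card := by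
  classical
  have hmaps : ∀ s ∈ (univ : Finset (ZMod n)).erase 0, n.gcd s.val ∈ n.properDivisors := by
    intro s hs
    exact gcd_mem_properDivisors n s (Finset.mem_erase.mp hs).1
  rw [← Finset.sum_fiberwise_of_maps_to hmaps]
  calc ∑ e ∈ n.properDivisors,
        ∑ s ∈ ((univ : Finset (ZMod n)).erase 0).filter (fun s => n.gcd s.val = e), n.gcd s.val
      ≤ ∑ e ∈ n.properDivisors, n := by
        apply Finset.sum_le_sum
        intro e he
        have h1 : ∑ s ∈ ((univ : Finset (ZMod n)).erase 0).filter (fun s => n.gcd s.val = e),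
            n.gcd s.val
            = ∑ _s ∈ ((univ : Finset (ZMod n)).erase 0).filter (fun s => n.gcd s.val = e), e := by
          apply Finset.sum_congr rfl
          intro s hs
          exact (Finset.mem_filter.mp hs).2
        rw [h1, Finset.sum_const, smul_eq_mul]
        have h2 := fiber_card_le n e he
        have hdvd := (Nat.mem_properDivisors.mp he).1
        calc _ ≤ (n / e) * e := Nat.mul_le_mul_right e h2
          _ = n := Nat.div_mul_cancel hdvd
    _ = n.properDivisors.card * n := by rw [Finset.sum_const, smul_eq_mul]
    _ ≤ n.divisors.card * n :=
        Nat.mul_le_mul_right n (Finset.card_le_card (Nat.properDivisors_subset_divisors))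
    _ = n * n.divisors.card := Nat.mul_comm _ _

lemma proper_mul_minFac_le (e : ℕ) (he : e ∈ n.properDivisors) (hn2 : 2 ≤ n) :
    e * n.minFac ≤ n := by
  obtain ⟨hdvd, hlt⟩ := Nat.mem_properDivisors.mp he
  have he0 : 0 < e := Nat.pos_of_mem_divisors (Nat.properDivisors_subset_divisors he)
  have hq : n / e ∣ n := Nat.div_dvd_of_dvd hdvd
  have hq1 : n / e ≠ 1 := by
    intro h
    have h2 := Nat.mul_div_cancel' hdvd
    rw [h, mul_one] at h2
    omega
  have hq0 : n / e ≠ 0 := by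
    intro h
    have h2 := Nat.mul_div_cancel' hdvd
    rw [h, mul_zero] at h2
    omega
  have h2le : 2 ≤ n / e := by
    have h0 := Nat.pos_of_ne_zero hq0
    omega
  have hmf : n.minFac ≤ n / e := Nat.minFac_le_of_dvd h2le hq
  calc e * n.minFac ≤ e * (n / e) := Nat.mul_le_mul_left e hmf
    _ = n := Nat.mul_div_cancel' hdvd

end GcdSum

section MainBound
variable (n : ℕ) [NeZero n] {d : ℕ}

lemma dot_smul_sub (s : ZMod n) (x y y' : Fin d → ZMod n) :
    dot x (fun i => s * (y i - y' i)) = s * (dot x y - dot x y') := by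
  rw [dot, dot, dot, mul_sub, Finset.mul_sum, Finset.mul_sum, ← Finset.sum_sub_distrib]
  apply Finset.sum_congr rfl
  intro i _
  ring

lemma inner_sq_identity (E : Finset (Fin d → ZMod n)) (t : ZMod n) (s : ZMod n) :
    ∑ x : Fin d → ZMod n,
        (‖∑ y ∈ E, chi n (s * (dot x y - t))‖) ^ 2
      = ∑ y ∈ E, ∑ y' ∈ E,
          (if (fun i => s * (y i - y' i)) = (0 : Fin d → ZMod n) then ((n : ℝ)) ^ d else 0) := by
  classical
  apply Complex.ofReal_injective
  push_cast
  have lhs_eq : (∑ x : Fin d → ZMod n,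
      ((‖∑ y ∈ E, chi n (s * (dot x y - t))‖) ^ 2 : ℂ))
      = ∑ x : Fin d → ZMod n,
        (∑ y ∈ E, chi n (s * (dot x y - t))) *
          (starRingEnd ℂ) (∑ y' ∈ E, chi n (s * (dot x y' - t))) := by
    apply Finset.sum_congr rfl
    intro x _
    rw [Complex.mul_conj, ← Complex.sq_norm]
    push_cast
    ring
  rw [lhs_eq]
  have expand : ∀ x : Fin d → ZMod n,
      (∑ y ∈ E, chi n (s * (dot x y - t))) *
        (starRingEnd ℂ) (∑ y' ∈ E, chi n (s * (dot x y' - t)))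
      = ∑ y ∈ E, ∑ y' ∈ E, chi n (dot x (fun i => s * (y i - y' i))) := by
    intro x
    rw [map_sum, Finset.sum_mul_sum]
    apply Finset.sum_congr rfl
    intro y _
    apply Finset.sum_congr rfl
    intro y' _
    rw [← chi_neg, ← chi_add, dot_smul_sub]
    congr 1
    ring
  rw [Finset.sum_congr rfl (fun x _ => expand x)]
  rw [Finset.sum_comm]
  apply Finset.sum_congr rfl
  intro y _
  rw [Finset.sum_comm]
  apply Finset.sum_congr rfl
  intro y' _
  rw [sum_chi_dot]
  split_ifs <;> push_cast <;> ring

lemma Fs_sq_bound (E : Finset (Fin d → ZMod n)) (t : ZMod n) (s : ZMod n) :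
    (‖∑ x ∈ E, ∑ y ∈ E, chi n (s * (dot x y - t))‖) ^ 2
      ≤ (E.card : ℝ) ^ 2 * ((n : ℝ) ^ d * ((n.gcd s.val : ℝ)) ^ d) := by
  classical
  set f : (Fin d → ZMod n) → ℂ := fun x => ∑ y ∈ E, chi n (s * (dot x y - t)) with hf
  have step1 : ‖∑ x ∈ E, f x‖ ≤ ∑ x ∈ E, ‖f x‖ := by
    simpa using norm_sum_le E f
  have step2 : (∑ x ∈ E, ‖f x‖) ^ 2
      ≤ (E.card : ℝ) * ∑ x ∈ E, (‖f x‖) ^ 2 :=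
    sq_sum_le_card_mul_sum_sq
  have step3 : ∑ x ∈ E, (‖f x‖) ^ 2
      ≤ ∑ x : Fin d → ZMod n, (‖f x‖) ^ 2 :=
    Finset.sum_le_sum_of_subset_of_nonneg (Finset.subset_univ E)
      (fun x _ _ => by positivity)
  have step4 : ∑ x : Fin d → ZMod n, (‖f x‖) ^ 2
      ≤ (E.card : ℝ) * ((n : ℝ) ^ d * ((n.gcd s.val : ℝ)) ^ d) := by
    rw [hf, inner_sq_identity]
    have inner_le : ∀ y ∈ E, (∑ y' ∈ E,
        (if (fun i => s * (y i - y' i)) = (0 : Fin d → ZMod n) then ((n : ℝ)) ^ d else 0))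
        ≤ (n : ℝ) ^ d * ((n.gcd s.val : ℝ)) ^ d := by
      intro y _
      rw [← Finset.sum_filter]
      rw [Finset.sum_const, nsmul_eq_mul]
      have hcard := card_fiber_vec n s E y
      have h1 : ((E.filter fun y' => (fun i => s * (y i - y' i))
          = (0 : Fin d → ZMod n)).card : ℝ) ≤ ((n.gcd s.val : ℝ)) ^ d := by
        rw [show ((n.gcd s.val : ℝ)) ^ d = (((n.gcd s.val) ^ d : ℕ) : ℝ) by push_cast; ring]
        exact_mod_cast hcard
      calc _ ≤ ((n.gcd s.val : ℝ)) ^ d * (n : ℝ) ^ d := by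
            apply mul_le_mul_of_nonneg_right h1 (by positivity)
        _ = (n : ℝ) ^ d * ((n.gcd s.val : ℝ)) ^ d := by ring
    calc ∑ y ∈ E, ∑ y' ∈ E,
          (if (fun i => s * (y i - y' i)) = (0 : Fin d → ZMod n) then ((n : ℝ)) ^ d else 0)
        ≤ ∑ y ∈ E, (n : ℝ) ^ d * ((n.gcd s.val : ℝ)) ^ d := Finset.sum_le_sum inner_le
      _ = (E.card : ℝ) * ((n : ℝ) ^ d * ((n.gcd s.val : ℝ)) ^ d) := by
          rw [Finset.sum_const, nsmul_eq_mul]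
  have habs : ‖∑ x ∈ E, ∑ y ∈ E, chi n (s * (dot x y - t))‖
      = ‖∑ x ∈ E, f x‖ := rfl
  rw [habs]
  have h0 : (0:ℝ) ≤ ‖∑ x ∈ E, f x‖ := norm_nonneg _
  calc (‖∑ x ∈ E, f x‖) ^ 2 ≤ (∑ x ∈ E, ‖f x‖) ^ 2 := by
        apply pow_le_pow_left₀ h0 step1
    _ ≤ (E.card : ℝ) * ∑ x ∈ E, (‖f x‖) ^ 2 := step2
    _ ≤ (E.card : ℝ) * ((E.card : ℝ) * ((n : ℝ) ^ d * ((n.gcd s.val : ℝ)) ^ d)) := by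
        apply mul_le_mul_of_nonneg_left (le_trans step3 step4) (by positivity)
    _ = (E.card : ℝ) ^ 2 * ((n : ℝ) ^ d * ((n.gcd s.val : ℝ)) ^ d) := by ring

end MainBound

section Rpow

lemma sqrt_bound (n d : ℕ) (hn3 : 3 ≤ n) (hd2 : 2 < d) (e : ℕ)
    (he : e ∈ n.properDivisors) :
    Real.sqrt ((n:ℝ)^d * (e:ℝ)^d)
      ≤ (e:ℝ) * ((n:ℝ)^(d-1) / (n.minFac:ℝ)^(((d:ℝ)-2)/2)) := by
  have hn0 : 0 < n := by omega
  haveI : NeZero n := ⟨by omega⟩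
  have ha : (0:ℝ) < n := by positivity
  have he0 : 0 < e := Nat.pos_of_mem_divisors (Nat.properDivisors_subset_divisors he)
  have hb : (0:ℝ) < e := by positivity
  have hcnat : 0 < n.minFac := Nat.minFac_pos n
  have hc : (0:ℝ) < n.minFac := by exact_mod_cast hcnat
  have hbc : (e:ℝ) * (n.minFac:ℝ) ≤ (n:ℝ) := by
    exact_mod_cast proper_mul_minFac_le n e he (by omega)
  have hble : (e:ℝ) ≤ (n:ℝ) / (n.minFac:ℝ) := (le_div_iff₀ hc).mpr hbc
  have hd1 : (2:ℝ) < (d:ℝ) := by exact_mod_cast hd2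
  have hexp : (0:ℝ) ≤ ((d:ℝ)-2)/2 := by linarith
  have step1 : Real.sqrt ((n:ℝ)^d * (e:ℝ)^d) = ((n:ℝ)*(e:ℝ)) ^ ((d:ℝ)/2) := by
    rw [← mul_pow, Real.sqrt_eq_rpow, ← Real.rpow_natCast ((n:ℝ)*(e:ℝ)) d,
      ← Real.rpow_mul (by positivity)]
    congr 1
    ring
  have step2 : ((n:ℝ)*(e:ℝ)) ^ ((d:ℝ)/2) = (n:ℝ)^((d:ℝ)/2) * (e:ℝ)^((d:ℝ)/2) :=
    Real.mul_rpow ha.le hb.le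
  have step3 : (e:ℝ)^((d:ℝ)/2) = (e:ℝ)^(((d:ℝ)-2)/2) * (e:ℝ) := by
    have hsplit : (d:ℝ)/2 = ((d:ℝ)-2)/2 + 1 := by ring
    rw [hsplit, Real.rpow_add hb, Real.rpow_one]
  have step4 : (e:ℝ)^(((d:ℝ)-2)/2) ≤ ((n:ℝ)/(n.minFac:ℝ))^(((d:ℝ)-2)/2) :=
    Real.rpow_le_rpow hb.le hble hexp
  have step5 : ((n:ℝ)/(n.minFac:ℝ))^(((d:ℝ)-2)/2)
      = (n:ℝ)^(((d:ℝ)-2)/2) / (n.minFac:ℝ)^(((d:ℝ)-2)/2) :=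
    Real.div_rpow ha.le hc.le (((d:ℝ)-2)/2)
  have step6 : (n:ℝ)^((d:ℝ)/2) * (n:ℝ)^(((d:ℝ)-2)/2) = (n:ℝ)^(d-1) := by
    rw [← Real.rpow_add ha, ← Real.rpow_natCast (n:ℝ) (d-1)]
    congr 1
    have : ((d-1 : ℕ) : ℝ) = (d:ℝ) - 1 := by
      have : 1 ≤ d := by omega
      push_cast [Nat.cast_sub this]
      ring
    rw [this]
    ring
  calc Real.sqrt ((n:ℝ)^d * (e:ℝ)^d)
      = (n:ℝ)^((d:ℝ)/2) * ((e:ℝ)^(((d:ℝ)-2)/2) * (e:ℝ)) := by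
        rw [step1, step2, step3]
    _ ≤ (n:ℝ)^((d:ℝ)/2) * (((n:ℝ)/(n.minFac:ℝ))^(((d:ℝ)-2)/2) * (e:ℝ)) := by
        apply mul_le_mul_of_nonneg_left _ (by positivity)
        exact mul_le_mul_of_nonneg_right step4 hb.le
    _ = (e:ℝ) * ((n:ℝ)^(d-1) / (n.minFac:ℝ)^(((d:ℝ)-2)/2)) := by
        rw [step5, ← step6]
        field_simp

end Rpow

theorem stmt3 (n d : ℕ) [NeZero n] (hodd : Odd n) (hn3 : 3 ≤ n) (hd : 2 < d)
    (E : Finset (Fin d → ZMod n))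
    (hE : (E.card : ℝ) >
      (n.divisors.card : ℝ) * (n : ℝ) ^ d / (n.minFac : ℝ) ^ (((d : ℝ) - 2) / 2)) :
    ∀ t : ZMod n, ∃ x ∈ E, ∃ y ∈ E, dot x y = t := by
  classical
  intro t
  by_contra hcon
  push_neg at hcon
  set γe : ℝ := (n.minFac : ℝ) ^ (((d : ℝ) - 2) / 2) with hγe
  have hmf : (0:ℝ) < (n.minFac : ℝ) := by
    have := Nat.minFac_pos n
    exact_mod_cast this
  have hγpos : 0 < γe := Real.rpow_pos_of_pos hmf _
  have hRHSpos : 0 ≤ (n.divisors.card : ℝ) * (n : ℝ) ^ d / γe := by positivity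
  have hcard : 0 < (E.card : ℝ) := lt_of_le_of_lt hRHSpos hE
  set F : ZMod n → ℂ := fun s => ∑ x ∈ E, ∑ y ∈ E, chi n (s * (dot x y - t)) with hF
  -- total sum is zero
  have hsum : ∑ s : ZMod n, F s = 0 := by
    rw [hF]
    rw [Finset.sum_comm]
    apply Finset.sum_eq_zero
    intro x hx
    rw [Finset.sum_comm]
    apply Finset.sum_eq_zero
    intro y hy
    rw [sum_chi n (dot x y - t), if_neg (sub_ne_zero_of_ne (hcon x hx y hy))]
  have hzero : F 0 = ((E.card : ℂ)) ^ 2 := by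
    rw [hF]
    simp only [zero_mul, chi_zero]
    rw [Finset.sum_congr rfl (fun x _ => Finset.sum_const (1:ℂ))]
    rw [Finset.sum_const]
    simp [mul_comm]
    ring
  have hsplit : F 0 + ∑ s ∈ (univ : Finset (ZMod n)).erase 0, F s = 0 := by
    rw [Finset.add_sum_erase _ F (Finset.mem_univ 0)]
    exact hsum
  have hneg : ∑ s ∈ (univ : Finset (ZMod n)).erase 0, F s = -(F 0) :=
    eq_neg_of_add_eq_zero_right hsplit
  have habs : ((E.card : ℝ)) ^ 2 ≤ ∑ s ∈ (univ : Finset (ZMod n)).erase 0,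
      ‖F s‖ := by
    calc ((E.card : ℝ)) ^ 2 = ‖F 0‖ := by
          rw [hzero, norm_pow, Complex.norm_natCast]
      _ = ‖∑ s ∈ (univ : Finset (ZMod n)).erase 0, F s‖ := by
          rw [hneg, norm_neg]
      _ ≤ ∑ s ∈ (univ : Finset (ZMod n)).erase 0, ‖F s‖ := by
          simpa using
            norm_sum_le ((univ : Finset (ZMod n)).erase 0) F
  -- per-s bound
  have hFs : ∀ s ∈ (univ : Finset (ZMod n)).erase 0,
      ‖F s‖ ≤ (E.card : ℝ) *
        ((n.gcd s.val : ℝ) * ((n:ℝ)^(d-1) / γe)) := by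
    intro s hs
    have hs0 : s ≠ 0 := (Finset.mem_erase.mp hs).1
    have h1 : (‖F s‖) ^ 2
        ≤ (E.card : ℝ) ^ 2 * ((n : ℝ) ^ d * ((n.gcd s.val : ℝ)) ^ d) :=
      Fs_sq_bound n E t s
    have h2 : ‖F s‖
        ≤ (E.card : ℝ) * Real.sqrt ((n:ℝ)^d * ((n.gcd s.val : ℝ))^d) := by
      have h3 : ‖F s‖ = Real.sqrt ((‖F s‖) ^ 2) :=
        (Real.sqrt_sq (norm_nonneg _)).symm
      rw [h3]
      calc Real.sqrt ((‖F s‖) ^ 2)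
          ≤ Real.sqrt ((E.card : ℝ) ^ 2 * ((n : ℝ) ^ d * ((n.gcd s.val : ℝ)) ^ d)) :=
            Real.sqrt_le_sqrt h1
        _ = (E.card : ℝ) * Real.sqrt ((n:ℝ)^d * ((n.gcd s.val : ℝ))^d) := by
            rw [Real.sqrt_mul (sq_nonneg _), Real.sqrt_sq hcard.le]
    refine le_trans h2 ?_
    apply mul_le_mul_of_nonneg_left _ hcard.le
    exact sqrt_bound n d hn3 hd _ (gcd_mem_properDivisors n s hs0)
  -- sum the bounds
  have hgcdsum : ∑ s ∈ (univ : Finset (ZMod n)).erase 0, ((n.gcd s.val : ℝ))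
      ≤ (n : ℝ) * (n.divisors.card : ℝ) := by
    have := gcd_sum_le n
    have hcast : ∑ s ∈ (univ : Finset (ZMod n)).erase 0, ((n.gcd s.val : ℝ))
        = ((∑ s ∈ (univ : Finset (ZMod n)).erase 0, n.gcd s.val : ℕ) : ℝ) := by
      push_cast
      rfl
    rw [hcast]
    calc ((∑ s ∈ (univ : Finset (ZMod n)).erase 0, n.gcd s.val : ℕ) : ℝ)
        ≤ ((n * n.divisors.card : ℕ) : ℝ) := by exact_mod_cast this
      _ = (n : ℝ) * (n.divisors.card : ℝ) := by push_cast; ring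
  have hsum2 : ∑ s ∈ (univ : Finset (ZMod n)).erase 0, ‖F s‖
      ≤ (E.card : ℝ) * ((n.divisors.card : ℝ) * (n : ℝ) ^ d / γe) := by
    calc ∑ s ∈ (univ : Finset (ZMod n)).erase 0, ‖F s‖
        ≤ ∑ s ∈ (univ : Finset (ZMod n)).erase 0,
            (E.card : ℝ) * ((n.gcd s.val : ℝ) * ((n:ℝ)^(d-1) / γe)) :=
          Finset.sum_le_sum hFs
      _ = ((E.card : ℝ) * ((n:ℝ)^(d-1) / γe)) *
            ∑ s ∈ (univ : Finset (ZMod n)).erase 0, ((n.gcd s.val : ℝ)) := by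
          rw [Finset.mul_sum]
          apply Finset.sum_congr rfl
          intro s _
          ring
      _ ≤ ((E.card : ℝ) * ((n:ℝ)^(d-1) / γe)) * ((n : ℝ) * (n.divisors.card : ℝ)) := by
          apply mul_le_mul_of_nonneg_left hgcdsum (by positivity)
      _ = (E.card : ℝ) * ((n.divisors.card : ℝ) * ((n : ℝ)^(d-1) * (n:ℝ)) / γe) := by
          field_simp
      _ = (E.card : ℝ) * ((n.divisors.card : ℝ) * (n : ℝ) ^ d / γe) := by
          have hda : d - 1 + 1 = d := by omega
          rw [← pow_succ, hda]
  have hfinal : ((E.card : ℝ)) ^ 2 < ((E.card : ℝ)) ^ 2 := by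
    calc ((E.card : ℝ)) ^ 2 ≤ (E.card : ℝ) * ((n.divisors.card : ℝ) * (n : ℝ) ^ d / γe) :=
          le_trans habs hsum2
      _ < (E.card : ℝ) * (E.card : ℝ) := by
          exact mul_lt_mul_of_pos_left hE hcard
      _ = ((E.card : ℝ)) ^ 2 := by ring
  exact lt_irrefl _ hfinal
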